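/- arXiv:1611.05753 — 6 statements merged into one kernel-verified Lean document; each statement's English description precedes it below -/
import Mathlib

section
/- The phylogenetic diversity function is submodular: for any sets of leaves A ⊆ B and any set C of leaves of a weighted rooted tree with nonnegative edge weights, PD(A ∪ C) − PD(A) ≥ PD(B ∪ C) − PD(B). -/
open scoped Classical

/-- `v` is an ancestor of `s` (or equal to `s`) in the rooted tree given by `parent`. -/
def AncestorOf {V : Type*} (parent : V → V) (v s : V) : Prop :=
  ∃ n : ℕ, parent^[n] s = v

/-- A leaf of the rooted tree given by `parent`: no other vertex has it as parent. -/
def IsLeaf {V : Type*} (parent : V → V) (v : V) : Prop :=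
  ∀ u, parent u = v → u = v

/-- Phylogenetic diversity of a set `S` of leaves: the total weight of the edges
on some path from the root `r` to a leaf in `S`. -/
noncomputable def PD {V : Type*} [Fintype V] (parent : V → V) (r : V) (w : V → ℝ)
    (S : Finset V) : ℝ :=
  ∑ v ∈ Finset.univ.filter (fun v => v ≠ r ∧ ∃ s ∈ S, AncestorOf parent v s), w v

/-- The phylogenetic diversity function is submodular. -/
theorem PD_submodular {V : Type*} [Fintype V] [DecidableEq V]
    (parent : V → V) (r : V) (w : V → ℝ)
    (hroot : parent r = r) (htree : ∀ v, AncestorOf parent r v)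
    (hw : ∀ v, 0 ≤ w v)
    (A B C : Finset V)
    (hA : ∀ s ∈ A, IsLeaf parent s) (hB : ∀ s ∈ B, IsLeaf parent s)
    (hC : ∀ s ∈ C, IsLeaf parent s)
    (hAB : A ⊆ B) :
    PD parent r w (B ∪ C) - PD parent r w B ≤ PD parent r w (A ∪ C) - PD parent r w A := by
  classical
  set E : Finset V → Finset V := fun S =>
    Finset.univ.filter (fun v => v ≠ r ∧ ∃ s ∈ S, AncestorOf parent v s) with hE
  have hmono : ∀ {S T : Finset V}, S ⊆ T → E S ⊆ E T := by
    intro S T hST v hv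
    simp only [hE, Finset.mem_filter, Finset.mem_univ, true_and] at hv ⊢
    obtain ⟨hne, s, hs, hanc⟩ := hv
    exact ⟨hne, s, hST hs, hanc⟩
  have key : ∀ S T : Finset V, S ⊆ T →
      PD parent r w T - PD parent r w S = ∑ v ∈ E T \ E S, w v := by
    intro S T hST
    have := Finset.sum_sdiff (f := w) (hmono hST)
    have hPD : ∀ S : Finset V, PD parent r w S = ∑ v ∈ E S, w v := by
      intro S
      unfold PD
      simp only [hE]
      congr 1
      exact Finset.filter_congr_decidable _ _ _
    rw [hPD T, hPD S]
    linarith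
  rw [key A (A ∪ C) Finset.subset_union_left,
      key B (B ∪ C) Finset.subset_union_left]
  apply Finset.sum_le_sum_of_subset_of_nonneg
  · intro v hv
    simp only [hE, Finset.mem_sdiff, Finset.mem_filter, Finset.mem_univ, true_and,
      Finset.mem_union] at hv ⊢
    obtain ⟨⟨hne, s, hs, hanc⟩, hnotB⟩ := hv
    have hnB : ¬ ∃ s ∈ B, AncestorOf parent v s := fun ⟨t, ht, hat⟩ =>
      hnotB ⟨hne, t, ht, hat⟩
    have hsC : s ∈ C := by
      rcases hs with hs | hs
      · exact absurd ⟨s, hs, hanc⟩ hnB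
      · exact hs
    refine ⟨⟨hne, s, Or.inr hsC, hanc⟩, ?_⟩
    rintro ⟨-, t, ht, hat⟩
    exact hnB ⟨t, hAB ht, hat⟩
  · intro v _ _
    exact hw v
end

section
/- Let O be a viable set of size at most k in a directed acyclic graph D whose truncated depth is d (the minimum of k and the length, in number of vertices, of a longest path ending in a sink). For any integer p with 1 ≤ p ≤ k, there exist ⌈k/p⌉ pairs (O_1,B_1),…,(O_{⌈k/p⌉},B_{⌈k/p⌉}) such that O = ⋃_i O_i, the sets O_i are pairwise disjoint, each O_i ∪ B_i is viable, |O_i| ≤ p, |B_i| ≤ d−1, and Σ_i |O_i ∪ B_i| ≤ (k/p)·(p+d−1). -/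
open scoped Classical

def IsSink {X : Type*} (E : X → X → Prop) (x : X) : Prop := ∀ y, ¬ E x y

def Viable {X : Type*} (E : X → X → Prop) (S : Finset X) : Prop :=
  ∀ s ∈ S, IsSink E s ∨ ∃ s' ∈ S, E s s'

/-!
Choose for every non-sink of `O` an out-neighbour in `O`. Following these choices from `x ∈ O`
gives a path to a sink inside `O`, so the paths form a forest on `O` rooted at sinks, and each
has at most `d` vertices by the depth bound (it has at most `#O ≤ k` of them anyway). List `O` in
a depth-first order of this forest and cut the list into blocks `O_i` of `p` consecutive vertices.
Subtrees are intervals of a depth-first order, so the ancestors of `O_i` outside `O_i` all lie on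
the path from the first vertex of `O_i` to its root: there are at most `d - 1` of them, and they
form `B_i`. Then `O_i ∪ B_i` is a union of paths to sinks, hence viable. The first block has no
outside ancestors, which gives the bound on `∑ |O_i ∪ B_i|`.
-/

open Finset Relation

namespace List

variable {α : Type*} [LinearOrder α] {s t u : List α}

theorem IsPrefix.lt_of_ne (h : s <+: t) (hne : s ≠ t) : s < t := by
  obtain ⟨u, rfl⟩ := h
  cases u with
  | nil => simp at hne
  | cons a u => simpa using Lex.append_left (· < ·) (Lex.nil (a := a) (l := u)) s

theorem IsPrefix.prefix_of_le_of_le (hsu : s <+: u) (hst : s ≤ t) (htu : t ≤ u) : s <+: t := by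
  rw [← not_lt] at hst htu
  induction s generalizing t u with
  | nil => exact nil_prefix
  | cons a s ih =>
    obtain ⟨u, rfl, hsu'⟩ : ∃ u', u = a :: u' ∧ s <+: u' := by
      obtain ⟨v, rfl⟩ := hsu
      exact ⟨s ++ v, rfl, prefix_append s v⟩
    cases t with
    | nil => exact absurd (nil_lt_cons a s) hst
    | cons b t =>
      simp only [cons_lt_cons_iff, not_or, not_and] at hst htu
      obtain rfl : a = b := le_antisymm (not_lt.mp hst.1) (not_lt.mp htu.1)
      exact cons_prefix_cons.mpr ⟨rfl, ih hsu' (hst.2 rfl) (htu.2 rfl)⟩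

end List

section Graph

variable {X : Type*} {E : X → X → Prop}

theorem Viable.biUnion {ι : Type*} [DecidableEq X] {s : Finset ι} {S : ι → Finset X}
    (h : ∀ i ∈ s, Viable E (S i)) : Viable E (s.biUnion S) := by
  intro x hx
  obtain ⟨i, hi, hxi⟩ := mem_biUnion.mp hx
  exact (h i hi x hxi).imp_right fun ⟨y, hy, hxy⟩ =>
    ⟨y, mem_biUnion.mpr ⟨i, hi, hy⟩, hxy⟩

theorem List.IsChain.viable_toFinset [DecidableEq X] {l : List X} (hl : l.IsChain E)
    (hlast : ∃ z, l.getLast? = some z ∧ IsSink E z) : Viable E l.toFinset := by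
  induction hl with
  | nil => simp at hlast
  | singleton a =>
    intro x hx
    rw [List.toFinset_cons, List.toFinset_nil, insert_empty_eq, Finset.mem_singleton] at hx
    obtain ⟨z, hz, hzs⟩ := hlast
    rw [List.getLast?_singleton, Option.some.injEq] at hz
    exact Or.inl (hx ▸ hz ▸ hzs)
  | @cons_cons a b l hab _ ih =>
    rw [List.toFinset_cons]
    intro x hx
    rw [Finset.mem_insert] at hx
    rcases hx with rfl | hx
    · exact Or.inr ⟨b, by simp, hab⟩
    · rw [List.getLast?_cons_cons] at hlast
      exact (ih hlast x hx).imp_right fun ⟨y, hy, hxy⟩ =>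
        ⟨y, Finset.mem_insert_of_mem hy, hxy⟩

theorem Viable.exists_succ {O : Finset X} (h : Viable E O) :
    ∃ f : X → X, ∀ x ∈ O, f x ∈ O ∧ (¬ IsSink E x → E x (f x)) := by
  have : ∀ x, ∃ y, x ∈ O → y ∈ O ∧ (¬ IsSink E x → E x y) := by
    intro x
    by_cases hx : x ∈ O
    · rcases h x hx with hs | ⟨y, hy, hxy⟩
      · exact ⟨x, fun _ => ⟨hx, fun hns => (hns hs).elim⟩⟩
      · exact ⟨y, fun _ => ⟨hy, fun _ => hxy⟩⟩
    · exact ⟨x, fun hx' => (hx hx').elim⟩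
  choose f hf using this
  exact ⟨f, hf⟩

theorem wellFounded_flip_of_acyclic [Finite X] (hacyc : ∀ x, ¬ TransGen E x x) :
    WellFounded (flip E) :=
  have : Std.Irrefl (TransGen (flip E)) := ⟨fun x h => hacyc x h.swap⟩
  Subrelation.wf TransGen.single (Finite.wellFounded_of_trans_of_irrefl _)

theorem List.IsChain.nodup_of_acyclic (hacyc : ∀ x, ¬ TransGen E x x) {l : List X}
    (hl : l.IsChain E) : l.Nodup :=
  (hl.imp fun _ _ => TransGen.single).pairwise.imp
    fun {a b} (hab : TransGen E a b) => show a ≠ b from fun hEq => hacyc a (hEq ▸ hab)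

theorem List.IsChain.length_le_of_depth (hacyc : ∀ x, ¬ TransGen E x x) {k d : ℕ}
    (hdepth : ∀ l : List X, l.IsChain E →
      (∃ x, l.getLast? = some x ∧ IsSink E x) → min k l.length ≤ d)
    {l : List X} (hl : l.IsChain E) (hlast : ∃ x, l.getLast? = some x ∧ IsSink E x)
    {O : Finset X} (hlO : ∀ y ∈ l, y ∈ O) (hOk : #O ≤ k) : l.length ≤ d := by
  have hlk : l.length ≤ k := calc
    l.length = #l.toFinset := (List.toFinset_card_of_nodup (hl.nodup_of_acyclic hacyc)).symm
    _ ≤ #O := card_le_card fun y hy => hlO y (List.mem_toFinset.mp hy)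
    _ ≤ k := hOk
  have := hdepth l hl hlast
  omega

end Graph

section Walk

variable {X : Type*} {E : X → X → Prop} (hwf : WellFounded (flip E)) (f : X → X)

noncomputable def succWalk : X → List X :=
  hwf.fix fun x ih => if h : E x (f x) then x :: ih (f x) h else [x]

variable {hwf f}

theorem succWalk_eq (x : X) :
    succWalk hwf f x = if E x (f x) then x :: succWalk hwf f (f x) else [x] := by
  rw [succWalk, hwf.fix_eq, dite_eq_ite]

theorem succWalk_of_rel {x : X} (h : E x (f x)) : succWalk hwf f x = x :: succWalk hwf f (f x) := by
  rw [succWalk_eq, if_pos h]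

theorem succWalk_of_not_rel {x : X} (h : ¬ E x (f x)) : succWalk hwf f x = [x] := by
  rw [succWalk_eq, if_neg h]

theorem head?_succWalk (x : X) : (succWalk hwf f x).head? = some x := by
  rw [succWalk_eq]
  split_ifs <;> rfl

theorem isChain_succWalk (x : X) : (succWalk hwf f x).IsChain E := by
  induction x using hwf.induction with
  | _ x ih =>
    by_cases h : E x (f x)
    · have hfx := ih (f x) h
      rw [succWalk_of_rel h]
      obtain ⟨t, ht⟩ := List.head?_eq_some_iff.mp (head?_succWalk (hwf := hwf) (f x))
      rw [ht] at hfx ⊢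
      exact hfx.cons_cons h
    · rw [succWalk_of_not_rel h]
      exact .singleton x

theorem succWalk_suffix_of_mem {x y : X} (hy : y ∈ succWalk hwf f x) :
    succWalk hwf f y <:+ succWalk hwf f x := by
  induction x using hwf.induction with
  | _ x ih =>
    by_cases h : E x (f x)
    · rw [succWalk_of_rel h] at hy ⊢
      rcases List.mem_cons.mp hy with rfl | hy
      · rw [succWalk_of_rel h]
      · exact (ih (f x) h hy).trans (List.suffix_cons _ _)
    · rw [succWalk_of_not_rel h, List.mem_singleton] at hy
      rw [hy]

theorem succWalk_subset {O : Finset X} (hO : ∀ y ∈ O, f y ∈ O) {x : X} (hx : x ∈ O) :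
    ∀ y ∈ succWalk hwf f x, y ∈ O := by
  induction x using hwf.induction with
  | _ x ih =>
    by_cases h : E x (f x)
    · rw [succWalk_of_rel h]
      intro y hy
      rcases List.mem_cons.mp hy with rfl | hy
      · exact hx
      · exact ih (f x) h (hO x hx) y hy
    · rw [succWalk_of_not_rel h]
      simpa using hx

theorem exists_getLast?_succWalk (x : X) :
    ∃ z, (succWalk hwf f x).getLast? = some z ∧ ¬ E z (f z) := by
  induction x using hwf.induction with
  | _ x ih =>
    by_cases h : E x (f x)
    · obtain ⟨t, ht⟩ := List.head?_eq_some_iff.mp (head?_succWalk (hwf := hwf) (f x))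
      rw [succWalk_of_rel h, ht, List.getLast?_cons_cons, ← ht]
      exact ih (f x) h
    · exact ⟨x, by rw [succWalk_of_not_rel h]; rfl, h⟩

end Walk

section Rank

variable {X β : Type*} [LinearOrder β] {O : Finset X} {key : X → β} {x y : X}

noncomputable def rankBy (O : Finset X) (key : X → β) (x : X) : ℕ :=
  #{y ∈ O | key y < key x}

theorem rankBy_lt_rankBy (hy : y ∈ O) (hlt : key y < key x) :
    rankBy O key y < rankBy O key x := by
  refine card_lt_card ((ssubset_iff_of_subset fun z hz => ?_).mpr ⟨y, ?_, ?_⟩)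
  · simp only [mem_filter] at hz ⊢
    exact ⟨hz.1, hz.2.trans hlt⟩
  · simpa using ⟨hy, hlt⟩
  · simp

theorem le_of_rankBy_le (hy : y ∈ O) (h : rankBy O key x ≤ rankBy O key y) : key x ≤ key y :=
  not_lt.mp fun hlt => (rankBy_lt_rankBy hy hlt).not_ge h

theorem rankBy_lt_card (hx : x ∈ O) : rankBy O key x < #O :=
  card_lt_card (filter_ssubset.mpr ⟨x, hx, lt_irrefl _⟩)

theorem injOn_rankBy (hkey : Set.InjOn key O) : Set.InjOn (rankBy O key) O :=
  fun _ hx _ hy hxy =>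
    hkey hx hy (le_antisymm (le_of_rankBy_le hy hxy.le) (le_of_rankBy_le hx hxy.ge))

end Rank

section Blocks

variable {X : Type*} {O : Finset X} {r : X → ℕ} {p : ℕ}

noncomputable def block (O : Finset X) (r : X → ℕ) (p i : ℕ) : Finset X :=
  {x ∈ O | r x / p = i}

theorem card_block_le (hr : Set.InjOn r O) (hp : 0 < p) (i : ℕ) : #(block O r p i) ≤ p := by
  calc #(block O r p i)
      ≤ #(Ico (i * p) (i * p + p)) := by
        refine card_le_card_of_injOn r (fun x hx => ?_) (hr.mono (filter_subset _ _))
        have := (Nat.div_eq_iff hp).mp (mem_filter.mp hx).2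
        simp only [coe_Ico, Set.mem_Ico]
        omega
    _ = p := by simp

theorem disjoint_block {i j : ℕ} (hij : i ≠ j) : Disjoint (block O r p i) (block O r p j) :=
  disjoint_filter.mpr fun _ _ hi hj => hij (hi.symm.trans hj)

theorem biUnion_block [DecidableEq X] {n : ℕ} (hp : 0 < p) (h : ∀ x ∈ O, r x < n * p) :
    univ.biUnion (fun i : Fin n => block O r p i) = O := by
  ext x
  simp only [block, mem_biUnion, mem_univ, mem_filter, true_and]
  refine ⟨fun ⟨_, hx, _⟩ => hx, fun hx => ⟨⟨r x / p, ?_⟩, hx, rfl⟩⟩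
  exact (Nat.div_lt_iff_lt_mul hp).mpr (h x hx)

end Blocks

section Forest

variable {X : Type*}

/-- `anc x` is the path from `x` to the root of its tree in a forest. -/
structure IsRootPaths (anc : X → List X) : Prop where
  head?_eq : ∀ x, (anc x).head? = some x
  suffix_of_mem : ∀ x, ∀ b ∈ anc x, anc b <:+ anc x

theorem isRootPaths_succWalk {E : X → X → Prop} (hwf : WellFounded (flip E)) (f : X → X) :
    IsRootPaths (succWalk hwf f) :=
  ⟨head?_succWalk, fun _ _ => succWalk_suffix_of_mem⟩

/-- Any injection of `X` into a linear order would do: the lexicographic order of these keys is a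
depth-first order of the forest. -/
noncomputable def rootKey (anc : X → List X) (x : X) : List Cardinal :=
  (anc x).reverse.map embeddingToCardinal

noncomputable abbrev dfsRank (O : Finset X) (anc : X → List X) : X → ℕ :=
  rankBy O (rootKey anc)

def outsideAncestors [DecidableEq X] (B : Finset X) (anc : X → List X) : Finset X :=
  B.biUnion (fun x => (anc x).toFinset) \ B

variable {anc : X → List X} {O : Finset X} {p : ℕ}

theorem rootKey_prefix_rootKey_iff {b x : X} :
    rootKey anc b <+: rootKey anc x ↔ anc b <:+ anc x := by
  rw [rootKey, rootKey, List.prefix_map_iff_of_injective embeddingToCardinal.injective,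
    List.reverse_prefix]

namespace IsRootPaths

theorem mem_self (h : IsRootPaths anc) (x : X) : x ∈ anc x :=
  List.mem_of_mem_head? (h.head?_eq x)

theorem eq_cons_tail (h : IsRootPaths anc) (x : X) : anc x = x :: (anc x).tail := by
  obtain ⟨t, ht⟩ := List.head?_eq_some_iff.mp (h.head?_eq x)
  rw [ht, List.tail_cons]

theorem rootKey_injective (h : IsRootPaths anc) : Function.Injective (rootKey anc) := by
  intro x y hxy
  simpa [rootKey, h.head?_eq, ← List.map_reverse] using
    congrArg (fun l => l.reverse.head?) hxy

theorem dfsRank_lt_of_mem (h : IsRootPaths anc) {b x : X} (hb : b ∈ O) (hbx : b ∈ anc x)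
    (hne : b ≠ x) : dfsRank O anc b < dfsRank O anc x :=
  rankBy_lt_rankBy hb <| (rootKey_prefix_rootKey_iff.mpr (h.suffix_of_mem x b hbx)).lt_of_ne
    (h.rootKey_injective.ne hne)

/-- Subtrees are intervals of the depth-first order. -/
theorem mem_of_dfsRank_le_of_le (h : IsRootPaths anc) {b x y : X} (hx : x ∈ O)
    (hy : y ∈ O) (hbx : b ∈ anc x) (hby : dfsRank O anc b ≤ dfsRank O anc y)
    (hyx : dfsRank O anc y ≤ dfsRank O anc x) : b ∈ anc y := by
  have hpre : rootKey anc b <+: rootKey anc y :=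
    (rootKey_prefix_rootKey_iff.mpr (h.suffix_of_mem x b hbx)).prefix_of_le_of_le
      (le_of_rankBy_le hy hby) (le_of_rankBy_le hx hyx)
  exact (rootKey_prefix_rootKey_iff.mp hpre).subset (h.mem_self b)

theorem mem_tail_of_mem_outsideAncestors [DecidableEq X] (h : IsRootPaths anc)
    (hO : ∀ x ∈ O, ∀ b ∈ anc x, b ∈ O) {i : ℕ} {y b : X}
    (hy : y ∈ block O (dfsRank O anc) p i)
    (hymin : ∀ z ∈ block O (dfsRank O anc) p i, dfsRank O anc y ≤ dfsRank O anc z)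
    (hb : b ∈ outsideAncestors (block O (dfsRank O anc) p i) anc) :
    b ∈ (anc y).tail ∧ i ≠ 0 := by
  set r := dfsRank O anc
  obtain ⟨hb, hbi⟩ := mem_sdiff.mp hb
  obtain ⟨x, hx, hbx⟩ := mem_biUnion.mp hb
  rw [List.mem_toFinset] at hbx
  have hxi := hx
  simp only [block, mem_filter] at hx hy hbi
  have hbO : b ∈ O := hO x hx.1 b hbx
  have hbx' : r b < r x := h.dfsRank_lt_of_mem hbO hbx fun hEq => hbi ⟨hbO, hEq ▸ hx.2⟩
  have hdiv : r b / p < i :=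
    lt_of_le_of_ne (hx.2 ▸ Nat.div_le_div_right hbx'.le) fun hEq => hbi ⟨hbO, hEq⟩
  have hby : r b < r y := Nat.lt_of_div_lt_div (hy.2 ▸ hdiv)
  have hbanc : b ∈ anc y := h.mem_of_dfsRank_le_of_le hx.1 hy.1 hbx hby.le (hymin x hxi)
  rw [h.eq_cons_tail y] at hbanc
  refine ⟨(List.mem_cons.mp hbanc).resolve_left ?_, ?_⟩
  · rintro rfl
    exact hby.false
  · rintro rfl
    exact Nat.not_lt_zero _ hdiv

theorem exists_outsideAncestors_subset_tail [DecidableEq X] (h : IsRootPaths anc)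
    (hO : ∀ x ∈ O, ∀ b ∈ anc x, b ∈ O) {i : ℕ}
    (hne : (outsideAncestors (block O (dfsRank O anc) p i) anc).Nonempty) :
    i ≠ 0 ∧ ∃ y ∈ O,
      outsideAncestors (block O (dfsRank O anc) p i) anc ⊆ (anc y).tail.toFinset := by
  obtain ⟨b, hb⟩ := hne
  have hblock : (block O (dfsRank O anc) p i).Nonempty := by
    obtain ⟨x, hx, -⟩ := mem_biUnion.mp (mem_sdiff.mp hb).1
    exact ⟨x, hx⟩
  obtain ⟨y, hy, hymin⟩ := exists_min_image _ (dfsRank O anc) hblock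
  exact ⟨(h.mem_tail_of_mem_outsideAncestors hO hy hymin hb).2, y, (mem_filter.mp hy).1,
    fun b' hb' => List.mem_toFinset.mpr (h.mem_tail_of_mem_outsideAncestors hO hy hymin hb').1⟩

theorem exists_decomposition [DecidableEq X] (h : IsRootPaths anc)
    (hO : ∀ x ∈ O, ∀ b ∈ anc x, b ∈ O) {d n : ℕ}
    (hlen : ∀ x ∈ O, (anc x).length ≤ d) (hp : 0 < p) (hn : #O ≤ n * p) :
    ∃ Os Bs : Fin n → Finset X, O = univ.biUnion Os ∧
      (∀ i j, i ≠ j → Disjoint (Os i) (Os j)) ∧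
      (∀ i, Os i ∪ Bs i = (Os i).biUnion fun x => (anc x).toFinset) ∧
      (∀ i, #(Os i) ≤ p) ∧ (∀ i, #(Bs i) ≤ d - 1) ∧
      ∀ i : Fin n, (i : ℕ) = 0 → Bs i = ∅ := by
  set r := dfsRank O anc
  refine ⟨fun i => block O r p i, fun i => outsideAncestors (block O r p i) anc,
    (biUnion_block hp fun x hx => (rankBy_lt_card hx).trans_le hn).symm,
    fun i j hij => disjoint_block (Fin.val_injective.ne hij),
    fun i => union_sdiff_of_subset fun x hx =>
      mem_biUnion.mpr ⟨x, hx, List.mem_toFinset.mpr (h.mem_self x)⟩,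
    fun i => card_block_le (injOn_rankBy h.rootKey_injective.injOn) hp i, fun i => ?_,
    fun i hi => ?_⟩
  · rcases (outsideAncestors (block O r p i) anc).eq_empty_or_nonempty with hemp | hne
    · simp [hemp]
    obtain ⟨-, y, hy, hsub⟩ := h.exists_outsideAncestors_subset_tail hO hne
    calc #(outsideAncestors (block O r p i) anc)
        ≤ #(anc y).tail.toFinset := card_le_card hsub
      _ ≤ (anc y).tail.length := List.toFinset_card_le _
      _ ≤ d - 1 := by rw [List.length_tail]; exact Nat.sub_le_sub_right (hlen y hy) 1
  · by_contra hne
    exact (h.exists_outsideAncestors_subset_tail hO (nonempty_iff_ne_empty.mpr hne)).1 hi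

end IsRootPaths

end Forest

theorem sum_card_union_le {X : Type*} [DecidableEq X] {n d : ℕ} {O : Finset X}
    {Os Bs : Fin n → Finset X} (hcover : O = univ.biUnion Os)
    (hdisj : ∀ i j, i ≠ j → Disjoint (Os i) (Os j)) (hB : ∀ i, #(Bs i) ≤ d - 1)
    (hB0 : ∀ i : Fin n, (i : ℕ) = 0 → Bs i = ∅) :
    ∑ i, #(Os i ∪ Bs i) ≤ #O + (n - 1) * (d - 1) := by
  have hO : #O = ∑ i, #(Os i) := by
    rw [hcover, card_biUnion fun i _ j _ hij => hdisj i j hij]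
  have hBsum : ∑ i, #(Bs i) ≤ (n - 1) * (d - 1) := by
    cases n with
    | zero => simp
    | succ m =>
      rw [Fin.sum_univ_succ, hB0 0 rfl, card_empty, zero_add, Nat.add_sub_cancel]
      simpa using sum_le_card_nsmul univ _ _ fun (i : Fin m) _ => hB i.succ
  calc ∑ i, #(Os i ∪ Bs i)
      ≤ ∑ i, (#(Os i) + #(Bs i)) := sum_le_sum fun i _ => card_union_le _ _
    _ = #O + ∑ i, #(Bs i) := by rw [sum_add_distrib, hO]
    _ ≤ #O + (n - 1) * (d - 1) := Nat.add_le_add_left hBsum _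

theorem le_add_sub_one_div_mul {k p : ℕ} (hp : 0 < p) : k ≤ (k + p - 1) / p * p := by
  have := Nat.lt_div_mul_add (a := k + p - 1) hp
  omega

theorem cast_add_mul_le_div_mul {m k p d : ℕ} (hm : m ≤ k) (hp : 0 < p) (hd : 1 ≤ d) :
    ((m + ((k + p - 1) / p - 1) * (d - 1) : ℕ) : ℝ) ≤ (k : ℝ) / p * (p + d - 1) := by
  have hn : ((k + p - 1) / p - 1) * p ≤ k := by
    have := Nat.div_mul_le_self (k + p - 1) p
    rw [Nat.sub_one_mul]
    omega
  have hp' : (0 : ℝ) < p := by exact_mod_cast hp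
  have hn' : (((k + p - 1) / p - 1 : ℕ) : ℝ) ≤ k / p := by
    rw [le_div_iff₀ hp']
    exact_mod_cast hn
  have hd' : (0 : ℝ) ≤ d - 1 := by
    rw [sub_nonneg]
    exact_mod_cast hd
  calc ((m + ((k + p - 1) / p - 1) * (d - 1) : ℕ) : ℝ)
      = m + (((k + p - 1) / p - 1 : ℕ) : ℝ) * (d - 1) := by push_cast [Nat.cast_sub hd]; ring
    _ ≤ k + k / p * (d - 1) :=
        add_le_add (by exact_mod_cast hm) (mul_le_mul_of_nonneg_right hn' hd')
    _ = k / p * (p + d - 1) := by field_simp; ring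

theorem decomposition_lemma_general {X : Type*} [Fintype X] [DecidableEq X]
    (E : X → X → Prop)
    (hacyc : ∀ x, ¬ Relation.TransGen E x x)
    (k p d : ℕ) (hp : 1 ≤ p) (hd1 : 1 ≤ d)
    (hdepth : ∀ l : List X, l.Chain' E →
      (∃ x, l.getLast? = some x ∧ IsSink E x) → min k l.length ≤ d)
    (O : Finset X) (hOviable : Viable E O) (hOcard : O.card ≤ k) :
    ∃ (Os Bs : Fin ((k + p - 1) / p) → Finset X),
      O = Finset.univ.biUnion Os ∧
      (∀ i j, i ≠ j → Disjoint (Os i) (Os j)) ∧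
      (∀ i, Viable E (Os i ∪ Bs i)) ∧
      (∀ i, (Os i).card ≤ p) ∧
      (∀ i, (Bs i).card ≤ d - 1) ∧
      (∑ i, ((Os i ∪ Bs i).card : ℝ)) ≤ (k : ℝ) / p * (p + d - 1) := by
  obtain ⟨f, hf⟩ := hOviable.exists_succ
  set anc := succWalk (wellFounded_flip_of_acyclic hacyc) f
  have hO : ∀ x ∈ O, ∀ b ∈ anc x, b ∈ O := fun x hx =>
    succWalk_subset (fun y hy => (hf y hy).1) hx
  have hlast : ∀ x ∈ O, ∃ z, (anc x).getLast? = some z ∧ IsSink E z := by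
    intro x hx
    obtain ⟨z, hz, hzf⟩ := exists_getLast?_succWalk x
    have hzO : z ∈ O := hO x hx z (List.mem_of_getLast? hz)
    exact ⟨z, hz, not_not.mp fun hns => hzf ((hf z hzO).2 hns)⟩
  obtain ⟨Os, Bs, hcover, hdisj, hunion, hOs, hBs, hB0⟩ :=
    (isRootPaths_succWalk _ f).exists_decomposition hO
      (fun x hx => (isChain_succWalk x).length_le_of_depth hacyc hdepth (hlast x hx) (hO x hx)
        hOcard)
      hp (hOcard.trans (le_add_sub_one_div_mul hp))
  refine ⟨Os, Bs, hcover, hdisj, fun i => ?_, hOs, hBs, ?_⟩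
  · rw [hunion]
    exact Viable.biUnion fun x hx => (isChain_succWalk x).viable_toFinset
      (hlast x (hcover ▸ mem_biUnion.mpr ⟨i, mem_univ i, hx⟩))
  · calc ∑ i, ((Os i ∪ Bs i).card : ℝ)
        ≤ ((#O + ((k + p - 1) / p - 1) * (d - 1) : ℕ) : ℝ) := by
          exact_mod_cast sum_card_union_le hcover hdisj hBs hB0
      _ ≤ (k : ℝ) / p * (p + d - 1) := cast_add_mul_le_div_mul hOcard hp hd1

/-- Decomposition lemma: a viable set `O` of size at most `k` in a DAG of
truncated depth `d` can be decomposed into `⌈k/p⌉` pairs `(O_i, B_i)` with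
`O = ⋃ O_i` (disjointly), `O_i ∪ B_i` viable, `|O_i| ≤ p`, `|B_i| ≤ d - 1`,
and `∑ |O_i ∪ B_i| ≤ (k/p)·(p + d - 1)`. -/
theorem decomposition_lemma {X : Type*} [Fintype X] [DecidableEq X]
    (E : X → X → Prop)
    (hacyc : ∀ x, ¬ Relation.TransGen E x x)
    (k p d : ℕ) (hp : 1 ≤ p) (hpk : p ≤ k) (hdk : d ≤ k) (hd1 : 1 ≤ d)
    (hdepth : ∀ l : List X, l.Chain' E →
      (∃ x, l.getLast? = some x ∧ IsSink E x) → min k l.length ≤ d)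
    (O : Finset X) (hOviable : Viable E O) (hOcard : O.card ≤ k) :
    ∃ (Os Bs : Fin ((k + p - 1) / p) → Finset X),
      O = Finset.univ.biUnion Os ∧
      (∀ i j, i ≠ j → Disjoint (Os i) (Os j)) ∧
      (∀ i, Viable E (Os i ∪ Bs i)) ∧
      (∀ i, (Os i).card ≤ p) ∧
      (∀ i, (Bs i).card ≤ d - 1) ∧
      (∑ i, ((Os i ∪ Bs i).card : ℝ)) ≤ (k : ℝ) / p * (p + d - 1) :=
  decomposition_lemma_general E hacyc k p d hp hd1 hdepth O hOviable hOcard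
end

section
/- Let f be a monotone submodular function with f(∅) = 0, O a fixed finite set, and suppose sets G_0 ⊆ G_1 ⊆ … and values c_1,…,c_i > 0 satisfy, for some constant 0 < γ ≤ 1 and all 1 ≤ j ≤ i, f(G_j) − f(G_{j−1}) ≥ (γ·c_j/K)·(f(O ∪ G_{j−1}) − f(G_{j−1})) with G_0 = ∅. Then f(G_i) ≥ (1 − Π_{j=1}^{i} (1 − γ·c_j/K))·f(O). -/
/-- Cumulative greedy gain: if `f` is monotone submodular with `f ∅ = 0`, and
each greedy step `j` gains at least `(γ·c_j/K)·(f(O ∪ G_{j-1}) - f(G_{j-1}))`,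
then `f(G_i) ≥ (1 - ∏_{j=1}^i (1 - γ·c_j/K))·f(O)`. -/
theorem greedy_cumulative_gain {X : Type*} [DecidableEq X] (f : Finset X → ℝ)
    (hmono : ∀ S S' : Finset X, S ⊆ S' → f S ≤ f S')
    (hsub : ∀ A B C : Finset X, A ⊆ B → f (B ∪ C) - f B ≤ f (A ∪ C) - f A)
    (hempty : f ∅ = 0)
    (O : Finset X) (i : ℕ) (G : ℕ → Finset X) (c : ℕ → ℝ) (K γ : ℝ)
    (hK : 0 < K) (hγ0 : 0 < γ) (hγ1 : γ ≤ 1)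
    (hc : ∀ j, 1 ≤ j → j ≤ i → 0 < c j)
    (hγc : ∀ j, 1 ≤ j → j ≤ i → γ * c j / K ≤ 1)
    (hG0 : G 0 = ∅)
    (hchain : ∀ j, 1 ≤ j → j ≤ i → G (j - 1) ⊆ G j)
    (hgain : ∀ j, 1 ≤ j → j ≤ i →
      γ * c j / K * (f (O ∪ G (j - 1)) - f (G (j - 1))) ≤ f (G j) - f (G (j - 1))) :
    (1 - ∏ j ∈ Finset.Icc 1 i, (1 - γ * c j / K)) * f O ≤ f (G i) := by
  induction i with
  | zero => simp [hG0, hempty]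
  | succ n ih =>
    have ih' := ih (fun j h1 h2 => hc j h1 (h2.trans (Nat.le_succ n)))
      (fun j h1 h2 => hγc j h1 (h2.trans (Nat.le_succ n)))
      (fun j h1 h2 => hchain j h1 (h2.trans (Nat.le_succ n)))
      (fun j h1 h2 => hgain j h1 (h2.trans (Nat.le_succ n)))
    set α := γ * c (n + 1) / K with hα
    have hα1 : α ≤ 1 := hγc (n + 1) (Nat.le_add_left 1 n) le_rfl
    have hα0 : 0 ≤ α := by
      have hc' := hc (n + 1) (Nat.le_add_left 1 n) le_rfl
      positivity
    have hfO : 0 ≤ f O := by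
      have := hmono ∅ O (Finset.empty_subset O); linarith [hempty]
    have hmonoO : f O ≤ f (O ∪ G n) := hmono O _ Finset.subset_union_left
    have hgain' := hgain (n + 1) (Nat.le_add_left 1 n) le_rfl
    simp only [Nat.add_sub_cancel] at hgain'
    have key : α * (f O - f (G n)) ≤ f (G (n + 1)) - f (G n) := by
      have : α * (f O - f (G n)) ≤ α * (f (O ∪ G n) - f (G n)) := by nlinarith
      linarith
    rw [Finset.prod_Icc_succ_top (Nat.le_add_left 1 n)]
    nlinarith [mul_le_mul_of_nonneg_left ih' (by linarith : (0:ℝ) ≤ 1 - α)]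
end

section
/- Let f be monotone submodular with f(∅) = 0, and let O be decomposed into pairwise disjoint sets O_1,…,O_t with Σ_j c(O_j) ≤ C, where c assigns a positive cost to each set. If S is a set with f(S|G)/c(S) ≥ f(O_j|G)/c(O_j) for all j, then f(S|G)/c(S) ≥ f(O|G)/C, where f(A|G) = f(A ∪ G) − f(G). -/
/-- If `O` is decomposed into pairwise disjoint sets `O_1, …, O_t` with total
cost at most `C`, and `S` has at least the marginal-gain-per-cost ratio of
every `O_j`, then `f(S|G)/c(S) ≥ f(O|G)/C`. -/
theorem ratio_bound {X : Type*} [DecidableEq X] (f : Finset X → ℝ)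
    (hmono : ∀ S S' : Finset X, S ⊆ S' → f S ≤ f S')
    (hsub : ∀ A B C : Finset X, A ⊆ B → f (B ∪ C) - f B ≤ f (A ∪ C) - f A)
    (hempty : f ∅ = 0)
    (t : ℕ) (Os : Fin t → Finset X)
    (hdisj : ∀ i j : Fin t, i ≠ j → Disjoint (Os i) (Os j))
    (O : Finset X) (hO : O = Finset.univ.biUnion Os)
    (c : Finset X → ℝ) (hcpos : ∀ j : Fin t, 0 < c (Os j))
    (C : ℝ) (hC : 0 < C) (hsum : ∑ j : Fin t, c (Os j) ≤ C)
    (G S : Finset X) (hcS : 0 < c S)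
    (hratio : ∀ j : Fin t,
      (f (Os j ∪ G) - f G) / c (Os j) ≤ (f (S ∪ G) - f G) / c S) :
    (f (O ∪ G) - f G) / C ≤ (f (S ∪ G) - f G) / c S := by
  set r : ℝ := (f (S ∪ G) - f G) / c S with hr
  have hrnn : 0 ≤ r := div_nonneg (by linarith [hmono G (S ∪ G) (Finset.subset_union_right)]) hcS.le
  -- key: marginal gain of a union is at most sum of marginal gains
  have key : ∀ s : Finset (Fin t),
      f (s.biUnion Os ∪ G) - f G ≤ ∑ j ∈ s, (f (Os j ∪ G) - f G) := by
    intro s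
    induction s using Finset.induction_on with
    | empty => simp
    | @insert a s ha ih =>
      rw [Finset.biUnion_insert, Finset.sum_insert ha]
      have h1 : f (Os a ∪ (s.biUnion Os ∪ G)) - f (s.biUnion Os ∪ G)
          ≤ f (Os a ∪ G) - f G := by
        have := hsub G (s.biUnion Os ∪ G) (Os a) Finset.subset_union_right
        have e1 : s.biUnion Os ∪ G ∪ Os a = Os a ∪ (s.biUnion Os ∪ G) := by
          ac_rfl
        have e2 : G ∪ Os a = Os a ∪ G := Finset.union_comm _ _
        rw [e1, e2] at this
        exact this
      have e3 : Os a ∪ s.biUnion Os ∪ G = Os a ∪ (s.biUnion Os ∪ G) := by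
        rw [Finset.union_assoc]
      rw [e3]
      linarith
  have h2 : f (O ∪ G) - f G ≤ ∑ j : Fin t, (f (Os j ∪ G) - f G) := by
    rw [hO]; exact key Finset.univ
  have h3 : ∑ j : Fin t, (f (Os j ∪ G) - f G) ≤ ∑ j : Fin t, c (Os j) * r := by
    apply Finset.sum_le_sum
    intro j _
    have := hratio j
    rw [div_le_iff₀ (hcpos j)] at this
    linarith [this]
  have h4 : ∑ j : Fin t, c (Os j) * r ≤ C * r := by
    rw [← Finset.sum_mul]
    exact mul_le_mul_of_nonneg_right hsum hrnn
  rw [div_le_iff₀ hC]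
  calc f (O ∪ G) - f G ≤ C * r := by linarith
  _ = r * C := mul_comm _ _
end

section
/- Let f be monotone submodular with f(∅)=0, and let O_1, …, O_t (t ≥ 3) be sets with O*_1, O*_2 chosen to maximize f(O_i ∪ O_j) over pairs, and O*_3 chosen to maximize f(O*_1 ∪ O*_2 ∪ O_i) over all i. Then for every index i, f(O_i | O*_1 ∪ O*_2) ≤ f(O*_1 ∪ O*_2 ∪ O*_3)/3, where f(A|B) = f(A ∪ B) − f(B). -/
/-- If `O*_1, O*_2` maximize `f(O_i ∪ O_j)` over pairs of distinct indices and
`O*_3` maximizes `f(O*_1 ∪ O*_2 ∪ O_i)`, then for every index `i`,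
`f(O_i | O*_1 ∪ O*_2) ≤ f(O*_1 ∪ O*_2 ∪ O*_3) / 3`. -/
theorem best_triple_bound {X : Type*} [DecidableEq X] (f : Finset X → ℝ)
    (hmono : ∀ S S' : Finset X, S ⊆ S' → f S ≤ f S')
    (hsub : ∀ A B C : Finset X, A ⊆ B → f (B ∪ C) - f B ≤ f (A ∪ C) - f A)
    (hempty : f ∅ = 0)
    (t : ℕ) (ht : 3 ≤ t) (Os : Fin t → Finset X)
    (i1 i2 i3 : Fin t) (h12ne : i1 ≠ i2)
    (hmax12 : ∀ i j : Fin t, i ≠ j → f (Os i ∪ Os j) ≤ f (Os i1 ∪ Os i2))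
    (hmax3 : ∀ i : Fin t, f (Os i1 ∪ Os i2 ∪ Os i) ≤ f (Os i1 ∪ Os i2 ∪ Os i3)) :
    ∀ i : Fin t,
      f (Os i ∪ (Os i1 ∪ Os i2)) - f (Os i1 ∪ Os i2) ≤
        f (Os i1 ∪ Os i2 ∪ Os i3) / 3 := by
  intro i
  set A := Os i1 with hA
  set B := Os i2 with hB
  set C := Os i3 with hC
  -- submodular inequalities
  have h1 : f (A ∪ (B ∪ C)) - f A ≤ f (B ∪ C) := by
    have := hsub ∅ A (B ∪ C) (Finset.empty_subset A)
    simpa [hempty] using this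
  have h2 : f ((A ∪ C) ∪ B) - f (A ∪ C) ≤ f (A ∪ B) - f A :=
    hsub A (A ∪ C) B Finset.subset_union_left
  have e1 : A ∪ (B ∪ C) = A ∪ B ∪ C := by
    rw [Finset.union_assoc]
  have e2 : (A ∪ C) ∪ B = A ∪ B ∪ C := by
    rw [Finset.union_right_comm]
  rw [e1] at h1
  rw [e2] at h2
  have hBC : f (B ∪ C) ≤ f (A ∪ B) := by
    by_cases h : i2 = i3
    · subst h
      exact hmono _ _ (Finset.union_subset Finset.subset_union_right
        Finset.subset_union_right)
    · exact hmax12 i2 i3 h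
  have hAC : f (A ∪ C) ≤ f (A ∪ B) := by
    by_cases h : i1 = i3
    · subst h
      exact hmono _ _ (Finset.union_subset Finset.subset_union_left
        Finset.subset_union_left)
    · exact hmax12 i1 i3 h
  have hi : f (A ∪ B ∪ Os i) ≤ f (A ∪ B ∪ C) := hmax3 i
  have ecomm : Os i ∪ (A ∪ B) = A ∪ B ∪ Os i := Finset.union_comm _ _
  rw [ecomm]
  linarith
end

section
/- In the 3-SAT reduction instance with generalized viability constraints, the formula φ is satisfiable if and only if there exists a viable set A of size at most k = 2·|X| + m + 1 with PD(A) > 0. -/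
open scoped Classical

/-- Species of the 3-SAT reduction: clause species `c_i`, literal species
`(x, b)` (with `b = true` for `x` and `b = false` for `x̄`), variable species
`c_x`, and the distinguished species `t`. -/
abbrev SatSp (n m : ℕ) := Fin m ⊕ (Fin n × Bool ⊕ (Fin n ⊕ Unit))

/-- The distinguished species `t`. -/
def tNode (n m : ℕ) : SatSp n m := Sum.inr (Sum.inr (Sum.inr ()))

/-- Food web of the 3-SAT reduction for a 3-CNF formula `φ` (clause `i` has
literals `φ i 0, φ i 1, φ i 2`, a literal being a variable with a polarity):
`c_x` has edges to both literals of `x`; `c_i` has edges to the literals of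
clause `i`; `t` has edges to all clause species `c_i` and all variable species
`c_x`. -/
def satE {n m : ℕ} (φ : Fin m → Fin 3 → Fin n × Bool) :
    SatSp n m → SatSp n m → Prop
  | Sum.inl i, Sum.inr (Sum.inl l) => ∃ j, φ i j = l
  | Sum.inr (Sum.inr (Sum.inl x)), Sum.inr (Sum.inl l) => l.1 = x
  | Sum.inr (Sum.inr (Sum.inr _)), Sum.inl _ => True
  | Sum.inr (Sum.inr (Sum.inr _)), Sum.inr (Sum.inr (Sum.inl _)) => True
  | _, _ => False

/-- Generalized viability: each member other than `t` is a sink or has an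
out-neighbor in the set, and if `t` belongs to the set then ALL out-neighbors
of `t` belong to the set. -/
def GViable {X : Type*} (E : X → X → Prop) (t : X) (S : Finset X) : Prop :=
  (∀ s ∈ S, s ≠ t → (∀ y, ¬ E s y) ∨ ∃ s' ∈ S, E s s') ∧
  (t ∈ S → ∀ s', E t s' → s' ∈ S)

/-- Phylogenetic diversity in the reduction instance: the tree is a star with
weight `1` on the edge to `t` and `0` elsewhere. -/
noncomputable def satPD {n m : ℕ} (A : Finset (SatSp n m)) : ℝ :=
  ∑ x ∈ A, (if x = tNode n m then (1 : ℝ) else 0)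

/-- Correctness of the 3-SAT reduction: `φ` is satisfiable iff there is a
(generalized) viable set `A` of size at most `k = 2n + m + 1` with `PD(A) > 0`. -/
theorem sat_reduction_correct {n m : ℕ} (φ : Fin m → Fin 3 → Fin n × Bool) :
    (∃ α : Fin n → Bool, ∀ i : Fin m, ∃ j : Fin 3, α (φ i j).1 = (φ i j).2) ↔
      (∃ A : Finset (SatSp n m), GViable (satE φ) (tNode n m) A ∧
        A.card ≤ 2 * n + m + 1 ∧ 0 < satPD A) := by
  constructor
  · rintro ⟨α, hα⟩
    set A : Finset (SatSp n m) :=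
      (Finset.univ.image (Sum.inl : Fin m → SatSp n m)) ∪
      (Finset.univ.image (fun x : Fin n => (Sum.inr (Sum.inl (x, α x)) : SatSp n m))) ∪
      (Finset.univ.image (fun x : Fin n => (Sum.inr (Sum.inr (Sum.inl x)) : SatSp n m))) ∪
      {tNode n m} with hA
    have htA : tNode n m ∈ A := by simp [hA]
    refine ⟨A, ⟨?_, ?_⟩, ?_, ?_⟩
    · rintro s hs hst
      rcases s with i | l | x | u
      · -- clause
        obtain ⟨j, hj⟩ := hα i
        refine Or.inr ⟨Sum.inr (Sum.inl ((φ i j).1, α (φ i j).1)), ?_, ?_⟩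
        · simp [hA]
        · exact ⟨j, by rw [hj]⟩
      · -- literal: sink
        refine Or.inl ?_
        rintro (y | y | y | y) <;> simp [satE]
      · -- c_x
        exact Or.inr ⟨Sum.inr (Sum.inl (x, α x)), by simp [hA], rfl⟩
      · exact absurd rfl hst
    · rintro _ (i | l | x | u) h
      · simp [hA]
      · exact absurd h (by simp [satE, tNode])
      · simp [hA]
      · exact absurd h (by simp [satE, tNode])
    · calc A.card ≤ m + n + n + 1 := by
            refine le_trans (Finset.card_union_le _ _) ?_
            have h1 := Finset.card_union_le
              ((Finset.univ.image (Sum.inl : Fin m → SatSp n m)) ∪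
               (Finset.univ.image (fun x : Fin n => (Sum.inr (Sum.inl (x, α x)) : SatSp n m))))
              (Finset.univ.image (fun x : Fin n => (Sum.inr (Sum.inr (Sum.inl x)) : SatSp n m)))
            have h2 := Finset.card_union_le
              (Finset.univ.image (Sum.inl : Fin m → SatSp n m))
              (Finset.univ.image (fun x : Fin n => (Sum.inr (Sum.inl (x, α x)) : SatSp n m)))
            have hm : (Finset.univ.image (Sum.inl : Fin m → SatSp n m)).card ≤ m := by
              simpa using Finset.card_image_le (s := (Finset.univ : Finset (Fin m)))
            have hn1 : (Finset.univ.image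
                (fun x : Fin n => (Sum.inr (Sum.inl (x, α x)) : SatSp n m))).card ≤ n := by
              simpa using Finset.card_image_le (s := (Finset.univ : Finset (Fin n)))
            have hn2 : (Finset.univ.image
                (fun x : Fin n => (Sum.inr (Sum.inr (Sum.inl x)) : SatSp n m))).card ≤ n := by
              simpa using Finset.card_image_le (s := (Finset.univ : Finset (Fin n)))
            have : ({tNode n m} : Finset (SatSp n m)).card = 1 := rfl
            omega
          _ ≤ 2 * n + m + 1 := by omega
    · have h1 : (1 : ℝ) ≤ satPD A := by
        have := Finset.single_le_sum
          (f := fun x : SatSp n m => (if x = tNode n m then (1 : ℝ) else 0))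
          (fun i _ => by positivity) htA
        simpa [satPD] using this
      linarith
  · rintro ⟨A, ⟨hv, ht⟩, hcard, hpd⟩
    -- t ∈ A
    have htA : tNode n m ∈ A := by
      by_contra h
      have : satPD A = 0 := by
        refine Finset.sum_eq_zero fun x hx => ?_
        have : x ≠ tNode n m := fun e => h (e ▸ hx)
        simp [this]
      linarith
    have hall := ht htA
    have hcl : ∀ i : Fin m, (Sum.inl i : SatSp n m) ∈ A := fun i =>
      hall _ (by trivial)
    have hcx : ∀ x : Fin n, (Sum.inr (Sum.inr (Sum.inl x)) : SatSp n m) ∈ A := fun x =>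
      hall _ (by trivial)
    -- literal set
    set L : Finset (Fin n × Bool) :=
      Finset.univ.filter (fun l => (Sum.inr (Sum.inl l) : SatSp n m) ∈ A) with hL
    -- each variable has a literal in L
    have hfib : ∀ x : Fin n, ∃ b : Bool, (x, b) ∈ L := by
      intro x
      have hne : (Sum.inr (Sum.inr (Sum.inl x)) : SatSp n m) ≠ tNode n m := by
        simp [tNode]
      rcases hv _ (hcx x) hne with h | ⟨s', hs', hE⟩
      · exact absurd (h (Sum.inr (Sum.inl (x, true)))) (by simp [satE])
      · rcases s' with i | l | y | u
        · exact absurd hE (by simp [satE])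
        · have : l.1 = x := hE
          exact ⟨l.2, by simp [hL, ← this, hs']⟩
        · exact absurd hE (by simp [satE])
        · exact absurd hE (by simp [satE])
    -- counting: L.card ≤ n
    have hsub : (Finset.univ.image (Sum.inl : Fin m → SatSp n m)) ∪
        (Finset.univ.image (fun x : Fin n => (Sum.inr (Sum.inr (Sum.inl x)) : SatSp n m))) ∪
        {tNode n m} ∪
        (L.image (fun l => (Sum.inr (Sum.inl l) : SatSp n m))) ⊆ A := by
      intro s hs
      simp only [Finset.mem_union, Finset.mem_image, Finset.mem_singleton,
        Finset.mem_univ, true_and] at hs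
      rcases hs with ((⟨i, rfl⟩ | ⟨x, rfl⟩) | rfl) | ⟨l, hl, rfl⟩
      · exact hcl i
      · exact hcx x
      · exact htA
      · simpa [hL] using hl
    have hcard2 : m + n + 1 + L.card ≤ A.card := by
      refine le_trans (le_of_eq ?_) (Finset.card_le_card hsub)
      rw [Finset.card_union_of_disjoint, Finset.card_union_of_disjoint,
          Finset.card_union_of_disjoint]
      · rw [Finset.card_image_of_injective _ Sum.inl_injective,
            Finset.card_image_of_injective _
              (fun a b h => by simpa using h),
            Finset.card_image_of_injective _
              (fun a b h => by simpa using h)]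
        simp
      · simp [Finset.disjoint_left, tNode]
      · simp [Finset.disjoint_left, tNode]
      · simp [Finset.disjoint_left, tNode]
    have hLn : L.card ≤ n := by omega
    -- fst is injective on L
    have himg : L.image Prod.fst = Finset.univ := by
      refine Finset.eq_univ_of_forall fun x => ?_
      obtain ⟨b, hb⟩ := hfib x
      exact Finset.mem_image.2 ⟨(x, b), hb, rfl⟩
    have hinj : Set.InjOn Prod.fst (L : Set (Fin n × Bool)) := by
      rw [← Finset.card_image_iff]
      have h1 : (L.image Prod.fst).card = n := by simp [himg]
      have h2 : (L.image Prod.fst).card ≤ L.card := Finset.card_image_le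
      omega
    -- define the assignment
    choose β hβ using hfib
    refine ⟨β, fun i => ?_⟩
    have hne : (Sum.inl i : SatSp n m) ≠ tNode n m := by simp [tNode]
    rcases hv _ (hcl i) hne with h | ⟨s', hs', hE⟩
    · exact absurd (h (Sum.inr (Sum.inl (φ i 0)))) (by simp [satE])
    · rcases s' with i' | l | y | u
      · exact absurd hE (by simp [satE])
      · obtain ⟨j, hj⟩ := hE
        have hlL : l ∈ L := by simpa [hL] using hs'
        have : (l.1, β l.1) = l :=
          hinj (Finset.mem_coe.2 (hβ l.1)) (Finset.mem_coe.2 hlL) rfl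
        refine ⟨j, ?_⟩
        rw [hj, ← this]
      · exact absurd hE (by simp [satE])
      · exact absurd hE (by simp [satE])
end
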